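/- Let E ⊂ ℝⁿ be a closed non-empty set with dist(·,E)^{-α} ∈ A_p for some α > 0 and 1 < p < ∞. Then with σ = p/α there is a constant C₀ > 0 depending on n, α, p and the A_p constant of dist(·,E)^{-α}, such that 𝓛_{Q₀}(t) ≤ (C₀/t^σ) 𝓢_{Q₀}(t) for every cube Q₀ intersecting E and every t ∈ (0,1). -/

import Mathlib

open MeasureTheory Set
open scoped Classical

/-- A half-open axis-parallel cube in `ℝⁿ`. -/
structure Cube (n : ℕ) where
  a : Fin n → ℝ
  l : ℝ
  l_pos : 0 < l

namespace Cube

/-- The set of points of the cube. -/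
def carrier {n : ℕ} (Q : Cube n) : Set (Fin n → ℝ) :=
  {x | ∀ i, Q.a i ≤ x i ∧ x i < Q.a i + Q.l}

/-- The volume (Lebesgue measure) of the cube. -/
def vol {n : ℕ} (Q : Cube n) : ℝ := Q.l ^ n

end Cube

/-- `Q` is a dyadic subcube of `Q₀` of generation `j`. -/
def IsDyadic {n : ℕ} (Q₀ Q : Cube n) (j : ℕ) : Prop :=
  Q.l = Q₀.l / 2 ^ j ∧
    ∃ k : Fin n → ℕ, (∀ i, k i < 2 ^ j) ∧ ∀ i, Q.a i = Q₀.a i + (k i : ℝ) * Q₀.l / 2 ^ j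

/-- The dyadic system of subcubes of `Q₀`. -/
def dyadicFamily {n : ℕ} (Q₀ : Cube n) : Set (Cube n) := {Q | ∃ j, IsDyadic Q₀ Q j}

/-- `P` is the dyadic parent of `Q` inside the dyadic system of `Q₀`. -/
def IsParent {n : ℕ} (Q₀ P Q : Cube n) : Prop :=
  ∃ j : ℕ, IsDyadic Q₀ Q (j + 1) ∧ IsDyadic Q₀ P j ∧ Q.carrier ⊆ P.carrier

/-- The family `D_E(Q₀)` of maximal dyadic subcubes of `Q₀` avoiding `E` whose dyadic
parent meets `E`. -/
def DE {n : ℕ} (E : Set (Fin n → ℝ)) (Q₀ : Cube n) : Set (Cube n) :=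
  {Q | Q ∈ dyadicFamily Q₀ ∧ Q.carrier ∩ E = ∅ ∧
    ∀ P : Cube n, IsParent Q₀ P Q → (P.carrier ∩ E).Nonempty}

/-- `Σ_{Q ∈ D_E(Q₀), l(Q) ≥ L} |Q|`. -/
noncomputable def sumGE {n : ℕ} (E : Set (Fin n → ℝ)) (Q₀ : Cube n) (L : ℝ) : ℝ :=
  ∑' Q : {Q : Cube n // Q ∈ DE E Q₀ ∧ L ≤ Q.l}, (Q : Cube n).vol

/-- `Σ_{Q ∈ D_E(Q₀), l(Q) ≤ L} |Q|`. -/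
noncomputable def sumLE {n : ℕ} (E : Set (Fin n → ℝ)) (Q₀ : Cube n) (L : ℝ) : ℝ :=
  ∑' Q : {Q : Cube n // Q ∈ DE E Q₀ ∧ Q.l ≤ L}, (Q : Cube n).vol

/-- `Σ_{Q ∈ D_E(Q₀), l(Q) < L} |Q|`. -/
noncomputable def sumLT {n : ℕ} (E : Set (Fin n → ℝ)) (Q₀ : Cube n) (L : ℝ) : ℝ :=
  ∑' Q : {Q : Cube n // Q ∈ DE E Q₀ ∧ Q.l < L}, (Q : Cube n).vol

/-- `Σ_{Q ∈ D_E(Q₀), l(Q) > L} |Q|`. -/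
noncomputable def sumGT {n : ℕ} (E : Set (Fin n → ℝ)) (Q₀ : Cube n) (L : ℝ) : ℝ :=
  ∑' Q : {Q : Cube n // Q ∈ DE E Q₀ ∧ L < Q.l}, (Q : Cube n).vol

/-- The set `𝓛(t,Q₀,E)`. -/
def Lset {n : ℕ} (t : ℝ) (Q₀ : Cube n) (E : Set (Fin n → ℝ)) : Set ℝ :=
  {L | 0 ≤ L ∧ t * Q₀.vol ≤ sumGE E Q₀ L}

/-- The set `𝓢(t,Q₀,E)`. -/
def Sset {n : ℕ} (t : ℝ) (Q₀ : Cube n) (E : Set (Fin n → ℝ)) : Set ℝ :=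
  {L | 0 ≤ L ∧ t * Q₀.vol ≤ sumLE E Q₀ L}

/-- `𝓛_{Q₀}(t) = sup 𝓛(t,Q₀,E)` (the max, when attained). -/
noncomputable def Lfun {n : ℕ} (E : Set (Fin n → ℝ)) (Q₀ : Cube n) (t : ℝ) : ℝ :=
  sSup (Lset t Q₀ E)

/-- `𝓢_{Q₀}(t) = inf 𝓢(t,Q₀,E)` (the min, when attained). -/
noncomputable def Sfun {n : ℕ} (E : Set (Fin n → ℝ)) (Q₀ : Cube n) (t : ℝ) : ℝ :=
  sInf (Sset t Q₀ E)

/-- The Muckenhoupt class `A_p` (for `p = 1` the `A₁` condition, for `p > 1` the usual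
`A_p` condition), with cubes as the testing family. -/
def IsAp {n : ℕ} (p : ℝ) (w : (Fin n → ℝ) → ℝ) : Prop :=
  (∀ᵐ x, 0 < w x) ∧ LocallyIntegrable w volume ∧
    ∃ C : ℝ, 0 < C ∧ ∀ Q : Cube n,
      if p = 1 then
        (∫ x in Q.carrier, w x) / Q.vol ≤ C * essInf w (volume.restrict Q.carrier)
      else
        ((∫ x in Q.carrier, w x) / Q.vol) *
          ((∫ x in Q.carrier, w x ^ (-1 / (p - 1))) / Q.vol) ^ (p - 1) ≤ C

/-!
Apply the `A_p` condition on `Q₀` itself. A cube `Q ∈ D_E(Q₀)` lies in its dyadic parent,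
which meets `E`, so `dist(·,E) ≤ 2 l(Q)` on `Q`; and the concentric cube of half the side stays
at distance `≥ l(Q)/4` from `E`. Hence if the cubes of side `≤ S` fill a `t`-fraction of `Q₀`,
the average of `w = dist(·,E)^{-α}` over `Q₀` is at least `t (2S)^{-α}`, and if the cubes of
side `≥ L` fill a `t`-fraction, the average of `w^{-1/(p-1)} = dist(·,E)^{α/(p-1)}` is at least
`2^{-n} t (L/4)^{α/(p-1)}`. The `A_p` inequality then gives
`t^p (L/8S)^α ≤ [w]_{A_p} 2^{n(p-1)}`, and taking the supremum over `L` and the infimum over `S`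
yields the claim with `C₀ = 8 ([w]_{A_p} 2^{n(p-1)})^{1/α}`.
-/

namespace Cube

variable {n : ℕ}

theorem ext {Q Q' : Cube n} (ha : Q.a = Q'.a) (hl : Q.l = Q'.l) : Q = Q' := by
  cases Q; cases Q'; simp_all

theorem carrier_eq_pi (Q : Cube n) :
    Q.carrier = univ.pi fun i => Ico (Q.a i) (Q.a i + Q.l) := by
  ext x; simp [carrier]

theorem measurableSet_carrier (Q : Cube n) : MeasurableSet Q.carrier := by
  rw [carrier_eq_pi]
  exact .univ_pi fun _ => measurableSet_Ico

theorem vol_pos (Q : Cube n) : 0 < Q.vol := pow_pos Q.l_pos n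

theorem volume_carrier (Q : Cube n) : volume Q.carrier = ENNReal.ofReal Q.vol := by
  rw [carrier_eq_pi, volume_pi_pi]
  simp [vol, ENNReal.ofReal_pow Q.l_pos.le]

theorem volume_real_carrier (Q : Cube n) : volume.real Q.carrier = Q.vol := by
  rw [measureReal_def, volume_carrier, ENNReal.toReal_ofReal Q.vol_pos.le]

theorem a_mem_carrier (Q : Cube n) : Q.a ∈ Q.carrier :=
  fun _ => ⟨le_rfl, lt_add_of_pos_right _ Q.l_pos⟩

theorem carrier_subset_Icc (Q : Cube n) : Q.carrier ⊆ Icc Q.a fun i => Q.a i + Q.l :=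
  fun _ hx => ⟨fun i => (hx i).1, fun i => (hx i).2.le⟩

theorem integrableOn_carrier {f : (Fin n → ℝ) → ℝ} (hf : LocallyIntegrable f) (Q : Cube n) :
    IntegrableOn f Q.carrier :=
  (hf.integrableOn_isCompact isCompact_Icc).mono_set Q.carrier_subset_Icc

theorem dist_le_l {Q : Cube n} {x y : Fin n → ℝ} (hx : x ∈ Q.carrier) (hy : y ∈ Q.carrier) :
    dist x y ≤ Q.l := by
  refine (dist_pi_le_iff Q.l_pos.le).2 fun i => ?_
  rw [Real.dist_eq, abs_sub_le_iff]
  constructor <;> linarith [hx i, hy i]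

theorem mul_vol_le_setIntegral {Q : Cube n} {f : (Fin n → ℝ) → ℝ} {c : ℝ}
    (hf : IntegrableOn f Q.carrier) (h : ∀ᵐ x ∂volume.restrict Q.carrier, c ≤ f x) :
    c * Q.vol ≤ ∫ x in Q.carrier, f x := by
  rw [← Q.volume_real_carrier, mul_comm, ← smul_eq_mul, ← setIntegral_const]
  refine setIntegral_mono_ae_restrict (integrableOn_const ?_) hf h
  simp [volume_carrier]

noncomputable def middle (Q : Cube n) : Cube n :=
  ⟨fun i => Q.a i + Q.l / 4, Q.l / 2, half_pos Q.l_pos⟩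

theorem middle_carrier_subset (Q : Cube n) : Q.middle.carrier ⊆ Q.carrier := fun x hx i => by
  have := hx i
  simp only [middle] at this
  constructor <;> linarith [Q.l_pos]

theorem vol_middle (Q : Cube n) : Q.middle.vol = Q.vol / 2 ^ n := by
  simp [vol, middle, div_pow]

theorem ball_subset_carrier_of_mem_middle {Q : Cube n} {x : Fin n → ℝ}
    (hx : x ∈ Q.middle.carrier) : Metric.ball x (Q.l / 4) ⊆ Q.carrier := fun y hy i => by
  have hxi := hx i
  have hyi := (dist_pi_lt_iff (by linarith [Q.l_pos])).1 (Metric.mem_ball.1 hy) i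
  simp only [middle] at hxi
  rw [Real.dist_eq, abs_sub_lt_iff] at hyi
  constructor <;> linarith

end Cube

theorem mem_Ico_add_mul_iff_floor_eq {a x s : ℝ} (hs : 0 < s) (k : ℕ) :
    x ∈ Ico (a + k * s) (a + k * s + s) ↔ a ≤ x ∧ ⌊(x - a) / s⌋₊ = k := by
  constructor
  · rintro ⟨h₁, h₂⟩
    have hk : 0 ≤ (k : ℝ) * s := by positivity
    refine ⟨by linarith, (Nat.floor_eq_iff (div_nonneg (by linarith) hs.le)).2 ⟨?_, ?_⟩⟩
    · rw [le_div_iff₀ hs]; linarith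
    · rw [div_lt_iff₀ hs]; linarith
  · rintro ⟨h, hk⟩
    obtain ⟨h₁, h₂⟩ := (Nat.floor_eq_iff (div_nonneg (by linarith) hs.le)).1 hk
    rw [le_div_iff₀ hs] at h₁
    rw [div_lt_iff₀ hs] at h₂
    constructor <;> linarith

section Dyadic

variable {n : ℕ} {Q₀ Q Q' : Cube n} {j j' : ℕ} {x : Fin n → ℝ}

/-- The index of the generation-`j` dyadic subcube of `Q₀` containing `x`, coordinatewise; it is
meaningful only where `Q₀.a i ≤ x i`, since `⌊·⌋₊` truncates negative values to `0`. -/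
noncomputable def dyadicIndex (Q₀ : Cube n) (j : ℕ) (x : Fin n → ℝ) (i : Fin n) : ℕ :=
  ⌊(x i - Q₀.a i) / (Q₀.l / 2 ^ j)⌋₊

theorem dyadicIndex_div_two_pow (h : j ≤ j') (i : Fin n) :
    dyadicIndex Q₀ j' x i / 2 ^ (j' - j) = dyadicIndex Q₀ j x i := by
  rw [dyadicIndex, dyadicIndex, ← Nat.floor_div_natCast]
  congr 1
  have hpow : (2 : ℝ) ^ j' = 2 ^ j * 2 ^ (j' - j) := by rw [← pow_add, Nat.add_sub_cancel' h]
  have := Q₀.l_pos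
  push_cast
  rw [hpow]
  field_simp

theorem mem_carrier_iff_dyadicIndex {k : Fin n → ℕ} (hl : Q.l = Q₀.l / 2 ^ j)
    (ha : ∀ i, Q.a i = Q₀.a i + k i * Q₀.l / 2 ^ j) :
    x ∈ Q.carrier ↔ ∀ i, Q₀.a i ≤ x i ∧ dyadicIndex Q₀ j x i = k i := by
  refine forall_congr' fun i => ?_
  rw [ha, hl, mul_div_assoc]
  exact mem_Ico_add_mul_iff_floor_eq (by have := Q₀.l_pos; positivity) (k i)

theorem isDyadic_self : IsDyadic Q₀ Q₀ 0 := ⟨by simp, 0, by simp, by simp⟩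

theorem IsDyadic.l_le (hQ : IsDyadic Q₀ Q j) : Q.l ≤ Q₀.l := by
  rw [hQ.1]
  exact div_le_self Q₀.l_pos.le (one_le_pow₀ one_le_two)

theorem IsDyadic.carrier_subset (hQ : IsDyadic Q₀ Q j) : Q.carrier ⊆ Q₀.carrier := by
  obtain ⟨hl, k, hk, ha⟩ := hQ
  intro y hy
  rw [mem_carrier_iff_dyadicIndex hl ha] at hy
  rw [mem_carrier_iff_dyadicIndex (Q₀ := Q₀) (Q := Q₀) (j := 0) (k := 0) (by simp) (by simp)]
  refine fun i => ⟨(hy i).1, ?_⟩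
  rw [← dyadicIndex_div_two_pow (Nat.zero_le j), (hy i).2, Nat.sub_zero, Nat.div_eq_of_lt (hk i),
    Pi.zero_apply]

theorem IsDyadic.carrier_subset_of_le (hQ : IsDyadic Q₀ Q j) (hQ' : IsDyadic Q₀ Q' j')
    (h : j ≤ j') (hx : x ∈ Q.carrier) (hx' : x ∈ Q'.carrier) : Q'.carrier ⊆ Q.carrier := by
  obtain ⟨hl, k, -, ha⟩ := hQ
  obtain ⟨hl', k', -, ha'⟩ := hQ'
  rw [mem_carrier_iff_dyadicIndex hl ha] at hx
  rw [mem_carrier_iff_dyadicIndex hl' ha'] at hx'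
  intro y hy
  rw [mem_carrier_iff_dyadicIndex hl' ha'] at hy
  rw [mem_carrier_iff_dyadicIndex hl ha]
  refine fun i => ⟨(hy i).1, ?_⟩
  rw [← dyadicIndex_div_two_pow h, (hy i).2, ← (hx' i).2, dyadicIndex_div_two_pow h, (hx i).2]

theorem IsDyadic.eq_of_mem (hQ : IsDyadic Q₀ Q j) (hQ' : IsDyadic Q₀ Q' j)
    (hx : x ∈ Q.carrier) (hx' : x ∈ Q'.carrier) : Q = Q' := by
  obtain ⟨hl, k, -, ha⟩ := hQ
  obtain ⟨hl', k', -, ha'⟩ := hQ'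
  rw [mem_carrier_iff_dyadicIndex hl ha] at hx
  rw [mem_carrier_iff_dyadicIndex hl' ha'] at hx'
  refine Cube.ext (funext fun i => ?_) (hl.trans hl'.symm)
  rw [ha, ha', ← (hx i).2, (hx' i).2]

theorem IsDyadic.eq_of_zero (hQ : IsDyadic Q₀ Q 0) : Q = Q₀ :=
  hQ.eq_of_mem isDyadic_self Q.a_mem_carrier (hQ.carrier_subset Q.a_mem_carrier)

theorem IsDyadic.exists_parent (hQ : IsDyadic Q₀ Q (j + 1)) :
    ∃ P, IsDyadic Q₀ P j ∧ Q.carrier ⊆ P.carrier := by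
  obtain ⟨hl, k, hk, ha⟩ := hQ
  let P : Cube n :=
    ⟨fun i => Q₀.a i + (k i / 2 : ℕ) * Q₀.l / 2 ^ j, Q₀.l / 2 ^ j,
      by have := Q₀.l_pos; positivity⟩
  refine ⟨P, ⟨rfl, fun i => k i / 2, fun i => ?_, fun i => rfl⟩, fun y hy => ?_⟩
  · have := hk i
    rw [pow_succ'] at this
    exact Nat.div_lt_of_lt_mul this
  rw [mem_carrier_iff_dyadicIndex hl ha] at hy
  rw [mem_carrier_iff_dyadicIndex (k := fun i => k i / 2) rfl fun i => rfl]
  refine fun i => ⟨(hy i).1, ?_⟩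
  rw [← dyadicIndex_div_two_pow (Nat.le_add_right j 1), (hy i).2, Nat.add_sub_cancel_left,
    pow_one]

theorem countable_dyadicFamily (Q₀ : Cube n) : (dyadicFamily Q₀).Countable := by
  refine (countable_range fun jk : ℕ × (Fin n → ℕ) =>
    (⟨fun i => Q₀.a i + jk.2 i * Q₀.l / 2 ^ jk.1, Q₀.l / 2 ^ jk.1,
      by have := Q₀.l_pos; positivity⟩ : Cube n)).mono ?_
  rintro Q ⟨j, hl, k, -, ha⟩
  exact ⟨(j, k), Cube.ext (funext fun i => (ha i).symm) hl.symm⟩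

end Dyadic

namespace DE

variable {n : ℕ} {E : Set (Fin n → ℝ)} {Q₀ Q Q' : Cube n} {j : ℕ} {x : Fin n → ℝ}

theorem l_le (hQ : Q ∈ DE E Q₀) : Q.l ≤ Q₀.l :=
  hQ.1.elim fun _ hj => hj.l_le

theorem carrier_subset (hQ : Q ∈ DE E Q₀) : Q.carrier ⊆ Q₀.carrier :=
  hQ.1.elim fun _ hj => hj.carrier_subset

theorem exists_parent (hQ : Q ∈ DE E Q₀) (hj : IsDyadic Q₀ Q (j + 1)) :
    ∃ P, IsDyadic Q₀ P j ∧ Q.carrier ⊆ P.carrier ∧ (P.carrier ∩ E).Nonempty := by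
  obtain ⟨P, hP, hQP⟩ := hj.exists_parent
  exact ⟨P, hP, hQP, hQ.2.2 P ⟨j, hj, hP, hQP⟩⟩

theorem eq_of_mem (hQ : Q ∈ DE E Q₀) (hQ' : Q' ∈ DE E Q₀) (hx : x ∈ Q.carrier)
    (hx' : x ∈ Q'.carrier) : Q = Q' := by
  obtain ⟨j, hj⟩ := hQ.1
  obtain ⟨j', hj'⟩ := hQ'.1
  wlog hjj' : j ≤ j' generalizing Q Q' j j'
  · exact (this hQ' hQ hx' hx j' hj' j hj (le_of_not_ge hjj')).symm
  rcases hjj'.eq_or_lt with rfl | hlt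
  · exact hj.eq_of_mem hj' hx hx'
  obtain ⟨m, rfl⟩ : ∃ m, j' = m + 1 := ⟨j' - 1, by omega⟩
  -- the parent of `Q'` lies inside `Q` but meets `E`, while `Q` does not
  obtain ⟨P, hP, hQ'P, y, hyP, hyE⟩ := exists_parent hQ' hj'
  have hPQ := hj.carrier_subset_of_le hP (by omega) hx (hQ'P hx')
  exact (hQ.2.1.subset ⟨hPQ hyP, hyE⟩).elim

theorem disjoint (hQ : Q ∈ DE E Q₀) (hQ' : Q' ∈ DE E Q₀) (hne : Q ≠ Q') :
    Disjoint Q.carrier Q'.carrier :=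
  disjoint_left.2 fun _ hx hx' => hne (eq_of_mem hQ hQ' hx hx')

instance countable_subtype (P : Cube n → Prop) :
    Countable {Q : Cube n // Q ∈ DE E Q₀ ∧ P Q} :=
  ((countable_dyadicFamily Q₀).mono fun _ hQ => hQ.1.1).to_subtype

theorem pairwise_disjoint (P : Cube n → Prop) :
    Pairwise (Function.onFun Disjoint
      fun Q : {Q : Cube n // Q ∈ DE E Q₀ ∧ P Q} => Q.1.carrier) :=
  fun Q Q' hne => DE.disjoint Q.2.1 Q'.2.1 fun h => hne (Subtype.ext h)

theorem summable_vol (P : Cube n → Prop) :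
    Summable fun Q : {Q : Cube n // Q ∈ DE E Q₀ ∧ P Q} => Q.1.vol := by
  refine (ENNReal.summable_toReal ?_).congr fun Q => Q.1.volume_real_carrier
  rw [← measure_iUnion (pairwise_disjoint P) fun Q => Q.1.measurableSet_carrier]
  refine ne_top_of_le_ne_top ?_ (measure_mono (iUnion_subset fun Q => carrier_subset Q.2.1))
  simp [Cube.volume_carrier]

theorem tsum_vol_mono {P P' : Cube n → Prop} (h : ∀ Q ∈ DE E Q₀, P Q → P' Q) :
    ∑' Q : {Q : Cube n // Q ∈ DE E Q₀ ∧ P Q}, Q.1.vol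
      ≤ ∑' Q : {Q : Cube n // Q ∈ DE E Q₀ ∧ P' Q}, Q.1.vol :=
  (summable_vol P).tsum_le_tsum_of_inj (fun Q => ⟨Q.1, Q.2.1, h _ Q.2.1 Q.2.2⟩)
    (fun _ _ hQ => Subtype.ext (by simpa using congrArg Subtype.val hQ))
    (fun Q _ => Q.1.vol_pos.le) (fun _ => le_rfl) (summable_vol P')

theorem mul_tsum_vol_le_setIntegral (P : Cube n → Prop) {f : (Fin n → ℝ) → ℝ} {c : ℝ}
    (hf : IntegrableOn f Q₀.carrier) (hf₀ : ∀ x, 0 ≤ f x)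
    (hc : ∀ Q ∈ DE E Q₀, P Q → c * Q.vol ≤ ∫ x in Q.carrier, f x) :
    c * ∑' Q : {Q : Cube n // Q ∈ DE E Q₀ ∧ P Q}, Q.1.vol
      ≤ ∫ x in Q₀.carrier, f x := by
  have hU : (⋃ Q : {Q : Cube n // Q ∈ DE E Q₀ ∧ P Q}, Q.1.carrier) ⊆ Q₀.carrier :=
    iUnion_subset fun Q => carrier_subset Q.2.1
  have hsum := hasSum_integral_iUnion (fun Q => Q.1.measurableSet_carrier) (pairwise_disjoint P)
    (hf.mono_set hU)
  rw [← tsum_mul_left]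
  calc _ ≤ ∑' Q : {Q : Cube n // Q ∈ DE E Q₀ ∧ P Q}, ∫ x in Q.1.carrier, f x :=
        ((summable_vol P).mul_left c).tsum_le_tsum (fun Q => hc Q.1 Q.2.1 Q.2.2) hsum.summable
    _ = _ := hsum.tsum_eq
    _ ≤ _ := setIntegral_mono_set hf (.of_forall hf₀) hU.eventuallyLE

theorem infDist_le (hQ : Q ∈ DE E Q₀) (hQ₀ : (Q₀.carrier ∩ E).Nonempty)
    (hx : x ∈ Q.carrier) :
    Metric.infDist x E ≤ 2 * Q.l := by
  obtain ⟨j, hj⟩ := hQ.1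
  cases j with
  | zero =>
    obtain rfl := hj.eq_of_zero
    exact absurd hQ.2.1 hQ₀.ne_empty
  | succ m =>
    obtain ⟨P, hP, hQP, y, hyP, hyE⟩ := exists_parent hQ hj
    calc Metric.infDist x E ≤ dist x y := Metric.infDist_le_dist_of_mem hyE
      _ ≤ P.l := P.dist_le_l (hQP hx) hyP
      _ = 2 * Q.l := by rw [hP.1, hj.1, pow_succ]; field_simp

theorem l_div_four_le_infDist (hQ : Q ∈ DE E Q₀) (hE : E.Nonempty)
    (hx : x ∈ Q.middle.carrier) :
    Q.l / 4 ≤ Metric.infDist x E := by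
  refine (Metric.le_infDist hE).2 fun y hyE => not_lt.1 fun hy => ?_
  have hyQ := Cube.ball_subset_carrier_of_mem_middle hx (Metric.mem_ball'.2 hy)
  exact hQ.2.1.subset ⟨hyQ, hyE⟩

end DE

section Averages

variable {n : ℕ} {E : Set (Fin n → ℝ)} {Q₀ : Cube n} {t : ℝ}

theorem pos_of_mem_Sset {S : ℝ} (ht : 0 < t) (hS : S ∈ Sset t Q₀ E) : 0 < S := by
  refine hS.1.lt_of_ne fun hS₀ => ?_
  have : IsEmpty {Q : Cube n // Q ∈ DE E Q₀ ∧ Q.l ≤ S} :=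
    ⟨fun Q => (Q.1.l_pos.trans_le (hS₀ ▸ Q.2.2)).false⟩
  have h := hS.2
  rw [sumLE, tsum_empty] at h
  exact (mul_pos ht Q₀.vol_pos).not_ge h

theorem Sset_nonempty {L : ℝ} (hL : L ∈ Lset t Q₀ E) : (Sset t Q₀ E).Nonempty :=
  ⟨Q₀.l, Q₀.l_pos.le, hL.2.trans (DE.tsum_vol_mono fun _ hQ _ => DE.l_le hQ)⟩

theorem mul_rpow_neg_le_average_of_mem_Sset {α S : ℝ} (hα : 0 < α)
    (hpos : ∀ᵐ x, 0 < Metric.infDist x E ^ (-α))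
    (hloc : LocallyIntegrable fun x => Metric.infDist x E ^ (-α))
    (hQ₀ : (Q₀.carrier ∩ E).Nonempty) (hS : S ∈ Sset t Q₀ E) :
    t * (2 * S) ^ (-α) ≤ (∫ x in Q₀.carrier, Metric.infDist x E ^ (-α)) / Q₀.vol := by
  have hcube : ∀ Q ∈ DE E Q₀, Q.l ≤ S →
      (2 * S) ^ (-α) * Q.vol ≤ ∫ x in Q.carrier, Metric.infDist x E ^ (-α) := by
    intro Q hQ hQS
    refine Cube.mul_vol_le_setIntegral ((Q₀.integrableOn_carrier hloc).mono_set
      (DE.carrier_subset hQ)) ?_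
    filter_upwards [ae_restrict_mem Q.measurableSet_carrier, ae_restrict_of_ae hpos]
      with x hx hw
    -- `0 ^ (-α) = 0`, so positivity of the weight rules out `infDist x E = 0`
    have hd : 0 < Metric.infDist x E := Metric.infDist_nonneg.lt_of_ne fun hd =>
      hw.ne' (hd ▸ Real.zero_rpow (neg_ne_zero.2 hα.ne'))
    exact Real.rpow_le_rpow_of_nonpos hd ((DE.infDist_le hQ hQ₀ hx).trans (by linarith))
      (by linarith)
  have h := DE.mul_tsum_vol_le_setIntegral (fun Q => Q.l ≤ S) (Q₀.integrableOn_carrier hloc)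
    (fun _ => Real.rpow_nonneg Metric.infDist_nonneg _) hcube
  rw [le_div_iff₀ Q₀.vol_pos]
  calc t * (2 * S) ^ (-α) * Q₀.vol = (2 * S) ^ (-α) * (t * Q₀.vol) := by ring
    _ ≤ (2 * S) ^ (-α) * sumLE E Q₀ S :=
        mul_le_mul_of_nonneg_left hS.2 (Real.rpow_nonneg (by linarith [hS.1]) _)
    _ ≤ _ := h

theorem mul_rpow_le_average_of_mem_Lset {β L : ℝ} (hβ : 0 ≤ β) (hE : E.Nonempty)
    (hL : L ∈ Lset t Q₀ E) :
    t / 2 ^ n * (L / 4) ^ β ≤ (∫ x in Q₀.carrier, Metric.infDist x E ^ β) / Q₀.vol := by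
  have hloc : LocallyIntegrable fun x => Metric.infDist x E ^ β :=
    ((Metric.continuous_infDist_pt E).rpow_const fun _ => Or.inr hβ).locallyIntegrable
  have hcube : ∀ Q ∈ DE E Q₀, L ≤ Q.l →
      (L / 4) ^ β / 2 ^ n * Q.vol ≤ ∫ x in Q.carrier, Metric.infDist x E ^ β := by
    intro Q hQ hLQ
    calc (L / 4) ^ β / 2 ^ n * Q.vol = (L / 4) ^ β * Q.middle.vol := by
          rw [Cube.vol_middle]; ring
      _ ≤ ∫ x in Q.middle.carrier, Metric.infDist x E ^ β := by
          refine Cube.mul_vol_le_setIntegral (Q.middle.integrableOn_carrier hloc) ?_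
          filter_upwards [ae_restrict_mem Q.middle.measurableSet_carrier] with x hx
          exact Real.rpow_le_rpow (by linarith [hL.1])
            ((div_le_div_of_nonneg_right hLQ zero_le_four).trans
              (DE.l_div_four_le_infDist hQ hE hx)) hβ
      _ ≤ ∫ x in Q.carrier, Metric.infDist x E ^ β :=
          setIntegral_mono_set (Q.integrableOn_carrier hloc)
            (.of_forall fun _ => Real.rpow_nonneg Metric.infDist_nonneg _)
            Q.middle_carrier_subset.eventuallyLE
  have h := DE.mul_tsum_vol_le_setIntegral (fun Q => L ≤ Q.l) (Q₀.integrableOn_carrier hloc)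
    (fun _ => Real.rpow_nonneg Metric.infDist_nonneg _) hcube
  rw [le_div_iff₀ Q₀.vol_pos]
  calc t / 2 ^ n * (L / 4) ^ β * Q₀.vol = (L / 4) ^ β / 2 ^ n * (t * Q₀.vol) := by ring
    _ ≤ (L / 4) ^ β / 2 ^ n * sumGE E Q₀ L :=
        mul_le_mul_of_nonneg_left hL.2 (by have := hL.1; positivity)
    _ ≤ _ := h

end Averages

theorem le_mul_of_mul_rpow_le {α p C N t L S : ℝ} (hα : 0 < α) (hp : 1 < p) (hN : 0 < N)
    (ht : 0 < t) (hL : 0 ≤ L) (hS : 0 < S)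
    (h : t * (2 * S) ^ (-α) * (t / N * (L / 4) ^ (α / (p - 1))) ^ (p - 1) ≤ C) :
    L ≤ 8 * (C * N ^ (p - 1)) ^ α⁻¹ / t ^ (p / α) * S := by
  have hpow : (t / N * (L / 4) ^ (α / (p - 1))) ^ (p - 1)
      = t ^ (p - 1) / N ^ (p - 1) * (L / 4) ^ α := by
    rw [Real.mul_rpow (div_pos ht hN).le (by positivity), Real.div_rpow ht.le hN.le,
      ← Real.rpow_mul (by positivity), div_mul_cancel₀ α (sub_pos.2 hp).ne']
  have hratio : (2 * S) ^ (-α) * (L / 4) ^ α = (L / (8 * S)) ^ α := by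
    rw [Real.rpow_neg (by positivity), inv_mul_eq_div,
      ← Real.div_rpow (by positivity) (by positivity)]
    ring_nf
  have key : t ^ p * (L / (8 * S)) ^ α ≤ C * N ^ (p - 1) :=
    calc t ^ p * (L / (8 * S)) ^ α
        = t * (2 * S) ^ (-α) * (t / N * (L / 4) ^ (α / (p - 1))) ^ (p - 1) * N ^ (p - 1) := by
          rw [hpow, ← hratio, Real.rpow_sub_one ht.ne']
          field_simp
      _ ≤ C * N ^ (p - 1) := by gcongr
  have hC : 0 ≤ C * N ^ (p - 1) := key.trans' (by positivity)
  have hroot := (Real.le_rpow_inv_iff_of_pos (by positivity) (by positivity) hα).2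
    ((le_div_iff₀' (by positivity)).2 key)
  rw [Real.div_rpow hC (by positivity), ← Real.rpow_mul ht.le, ← div_eq_mul_inv,
    div_le_iff₀ (by positivity)] at hroot
  exact hroot.trans_eq (by ring)

theorem sSup_le_mul_sInf {A B : Set ℝ} {c : ℝ} (hc : 0 < c) (hB : ∀ b ∈ B, 0 ≤ b)
    (hAB : A.Nonempty → B.Nonempty) (h : ∀ a ∈ A, ∀ b ∈ B, a ≤ c * b) :
    sSup A ≤ c * sInf B := by
  rcases A.eq_empty_or_nonempty with rfl | hA
  · rw [Real.sSup_empty]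
    exact mul_nonneg hc.le (Real.sInf_nonneg hB)
  refine csSup_le hA fun a ha => ?_
  rw [← div_le_iff₀' hc]
  exact le_csInf (hAB hA) fun b hb => (div_le_iff₀' hc).2 (h a ha b hb)

theorem le_mul_of_mem_Lset_of_mem_Sset {n : ℕ} {E : Set (Fin n → ℝ)} {Q₀ : Cube n}
    {α p C t L S : ℝ} (hα : 0 < α) (hp : 1 < p)
    (hpos : ∀ᵐ x, 0 < Metric.infDist x E ^ (-α))
    (hloc : LocallyIntegrable fun x => Metric.infDist x E ^ (-α))
    (hAp : ((∫ x in Q₀.carrier, Metric.infDist x E ^ (-α)) / Q₀.vol) *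
      ((∫ x in Q₀.carrier, (Metric.infDist x E ^ (-α)) ^ (-1 / (p - 1))) / Q₀.vol) ^ (p - 1)
        ≤ C)
    (hQ₀ : (Q₀.carrier ∩ E).Nonempty) (ht : 0 < t) (hL : L ∈ Lset t Q₀ E)
    (hS : S ∈ Sset t Q₀ E) :
    L ≤ 8 * (C * ((2 : ℝ) ^ n) ^ (p - 1)) ^ α⁻¹ / t ^ (p / α) * S := by
  have hdual : ∀ x : Fin n → ℝ,
      (Metric.infDist x E ^ (-α)) ^ (-1 / (p - 1)) = Metric.infDist x E ^ (α / (p - 1)) := by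
    intro x
    rw [← Real.rpow_mul Metric.infDist_nonneg]
    ring_nf
  simp_rw [hdual] at hAp
  have hβ : 0 ≤ α / (p - 1) := div_nonneg hα.le (by linarith)
  have hE : E.Nonempty := hQ₀.mono inter_subset_right
  refine le_mul_of_mul_rpow_le hα hp (by positivity) ht hL.1 (pos_of_mem_Sset ht hS)
    (le_trans ?_ hAp)
  exact mul_le_mul (mul_rpow_neg_le_average_of_mem_Sset hα hpos hloc hQ₀ hS)
    (Real.rpow_le_rpow (by have := hL.1; positivity)
      (mul_rpow_le_average_of_mem_Lset hβ hE hL) (by linarith))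
    (by have := hL.1; positivity)
    (div_nonneg (setIntegral_nonneg Q₀.measurableSet_carrier fun _ _ =>
      Real.rpow_nonneg Metric.infDist_nonneg _) Q₀.vol_pos.le)

theorem stmt11_general {n : ℕ} (E : Set (Fin n → ℝ))
    (α p : ℝ) (hα : 0 < α) (hp : 1 < p)
    (h : IsAp p (fun x => Metric.infDist x E ^ (-α))) :
    ∃ C₀ : ℝ, 0 < C₀ ∧ ∀ Q₀ : Cube n, (Q₀.carrier ∩ E).Nonempty →
      ∀ t ∈ Set.Ioo (0 : ℝ) 1,
        Lfun E Q₀ t ≤ C₀ / t ^ (p / α) * Sfun E Q₀ t := by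
  obtain ⟨hpos, hloc, C, hC, hAp⟩ := h
  refine ⟨8 * (C * ((2 : ℝ) ^ n) ^ (p - 1)) ^ α⁻¹, by positivity,
    fun Q₀ hQ₀ t ht => ?_⟩
  have hApQ₀ := hAp Q₀
  rw [if_neg hp.ne'] at hApQ₀
  exact sSup_le_mul_sInf (by have := ht.1; positivity) (fun S hS => hS.1)
    (fun ⟨_, hL⟩ => Sset_nonempty hL) fun L hL S hS =>
      le_mul_of_mem_Lset_of_mem_Sset hα hp hpos hloc hApQ₀ hQ₀ ht.1 hL hS

/-- If `dist(·,E)^{-α} ∈ A_p` with `α > 0`, `1 < p < ∞`, then with `σ = p/α` there is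
`C₀ > 0` with `𝓛_{Q₀}(t) ≤ (C₀/t^σ) 𝓢_{Q₀}(t)` for all cubes `Q₀` meeting `E` and
all `t ∈ (0,1)`. -/
theorem stmt11 {n : ℕ} (E : Set (Fin n → ℝ)) (hE : IsClosed E) (hne : E.Nonempty)
    (α p : ℝ) (hα : 0 < α) (hp : 1 < p)
    (h : IsAp p (fun x => Metric.infDist x E ^ (-α))) :
    ∃ C₀ : ℝ, 0 < C₀ ∧ ∀ Q₀ : Cube n, (Q₀.carrier ∩ E).Nonempty →
      ∀ t ∈ Set.Ioo (0 : ℝ) 1,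
        Lfun E Q₀ t ≤ C₀ / t ^ (p / α) * Sfun E Q₀ t :=
  stmt11_general E α p hα hp h
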